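/- Let r > 0 and let Γ be a countable family of biholomorphic automorphisms of the unit disc D such that the map γ ↦ γ(0) is injective and the orbit {γ(0) : γ ∈ Γ} is an r-separated subset of D for the hyperbolic distance. Then for every bounded holomorphic function f : D → ℂ, the Poincaré series Σ_{γ∈Γ} f(γ(z))·(γ′(z))² converges absolutely and uniformly on compact subsets of D, and defines a holomorphic function on D. -/

import Mathlib

open Metric Filter Complex

/-- The inverse hyperbolic tangent, `arctanh x = ½ log((1+x)/(1−x))`. -/
noncomputable def arctanh (x : ℝ) : ℝ := Real.log ((1 + x) / (1 - x)) / 2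

/-- The hyperbolic distance on the unit disc:
`d(a,z) = arctanh |(a−z)/(1−conj(a)·z)|`. -/
noncomputable def hdist (a z : ℂ) : ℝ :=
  arctanh ‖(a - z) / (1 - (starRingEnd ℂ) a * z)‖


noncomputable section
def mob (a z : ℂ) : ℂ := (a - z) / (1 - (starRingEnd ℂ) a * z)

lemma den_ne {a z : ℂ} (ha : ‖a‖ < 1) (hz : ‖z‖ < 1) : (1 : ℂ) - (starRingEnd ℂ) a * z ≠ 0 := by
  intro h
  have : ‖(starRingEnd ℂ) a * z‖ < 1 := by
    rw [norm_mul, RingHomIsometric.norm_map]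
    nlinarith [norm_nonneg a, norm_nonneg z]
  rw [sub_eq_zero] at h
  rw [← h] at this
  simp at this

lemma key_identity (a z : ℂ) :
    ‖1 - (starRingEnd ℂ) a * z‖ ^ 2 - ‖a - z‖ ^ 2 = (1 - ‖a‖ ^ 2) * (1 - ‖z‖ ^ 2) := by
  have h : ∀ w : ℂ, (‖w‖ ^ 2 : ℂ) = w * (starRingEnd ℂ) w := fun w => by
    rw [Complex.mul_conj']
  have : ((‖1 - (starRingEnd ℂ) a * z‖ ^ 2 - ‖a - z‖ ^ 2 : ℝ) : ℂ)
      = ((1 - ‖a‖ ^ 2) * (1 - ‖z‖ ^ 2) : ℝ) := by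
    push_cast
    rw [h, h, h, h]
    simp only [map_sub, map_mul, map_one, Complex.conj_conj]
    ring
  exact_mod_cast this

lemma norm_sub_lt (a z : ℂ) (ha : ‖a‖ < 1) (hz : ‖z‖ < 1) :
    ‖a - z‖ < ‖1 - (starRingEnd ℂ) a * z‖ := by
  have h := key_identity a z
  have h2 : (0:ℝ) < (1 - ‖a‖ ^ 2) * (1 - ‖z‖ ^ 2) := by
    have := norm_nonneg a; have := norm_nonneg z
    have ha2 : ‖a‖ ^ 2 < 1 := by nlinarith
    have hz2 : ‖z‖ ^ 2 < 1 := by nlinarith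
    nlinarith
  nlinarith [norm_nonneg (a - z), norm_nonneg (1 - (starRingEnd ℂ) a * z)]

lemma mob_lt_one {a z : ℂ} (ha : ‖a‖ < 1) (hz : ‖z‖ < 1) : ‖mob a z‖ < 1 := by
  have hd := den_ne ha hz
  have hpos : 0 < ‖1 - (starRingEnd ℂ) a * z‖ := norm_pos_iff.mpr hd
  rw [mob, norm_div, div_lt_one hpos]
  exact norm_sub_lt a z ha hz

lemma one_sub_mob_sq {a z : ℂ} (ha : ‖a‖ < 1) (hz : ‖z‖ < 1) :
    1 - ‖mob a z‖ ^ 2 = (1 - ‖a‖ ^ 2) * (1 - ‖z‖ ^ 2) / ‖1 - (starRingEnd ℂ) a * z‖ ^ 2 := by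
  have hd := den_ne ha hz
  have hpos : 0 < ‖1 - (starRingEnd ℂ) a * z‖ := norm_pos_iff.mpr hd
  have h := key_identity a z
  have h2 : ‖mob a z‖ ^ 2 = ‖a - z‖ ^ 2 / ‖1 - (starRingEnd ℂ) a * z‖ ^ 2 := by
    rw [mob, norm_div, div_pow]
  rw [h2, ← h, sub_div, div_self (by positivity)]

lemma mob_zero (a : ℂ) : mob a 0 = a := by simp [mob]

lemma mob_self {a : ℂ} (ha : ‖a‖ < 1) : mob a a = 0 := by simp [mob]

lemma mob_invol {a z : ℂ} (ha : ‖a‖ < 1) (hz : ‖z‖ < 1) : mob a (mob a z) = z := by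
  have hd := den_ne ha hz
  have hd2 := den_ne ha (mob_lt_one ha hz)
  have haa : (1 : ℂ) - a * (starRingEnd ℂ) a ≠ 0 := by
    intro h
    have h1 : ‖a * (starRingEnd ℂ) a‖ < 1 := by
      rw [norm_mul, RingHomIsometric.norm_map]; nlinarith [norm_nonneg a]
    rw [sub_eq_zero] at h; rw [← h] at h1; simp at h1
  simp only [mob] at hd2 ⊢
  rw [div_eq_iff hd2]
  rw [sub_div' hd, mul_sub, mul_one, mul_div_assoc', sub_div' hd]
  rw [mul_div_assoc']
  rw [div_eq_div_iff hd hd]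
  ring

lemma mob_diffOn {a : ℂ} (ha : ‖a‖ < 1) : DifferentiableOn ℂ (mob a) (ball 0 1) := by
  intro z hz
  rw [mem_ball_zero_iff] at hz
  exact ((differentiable_const a).sub differentiable_id).differentiableAt.differentiableWithinAt.div
    (((differentiable_const (1:ℂ)).sub ((differentiable_const _).mul differentiable_id)).differentiableAt.differentiableWithinAt)
    (den_ne ha hz)

lemma mob_mapsTo {a : ℂ} (ha : ‖a‖ < 1) : Set.MapsTo (mob a) (ball 0 1) (ball 0 1) := by
  intro z hz
  rw [mem_ball_zero_iff] at hz ⊢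
  exact mob_lt_one ha hz

lemma pick0 {γ : ℂ → ℂ} (hd : DifferentiableOn ℂ γ (ball 0 1))
    (hm : Set.MapsTo γ (ball 0 1) (ball 0 1)) {z : ℂ} (hz : ‖z‖ < 1) :
    ‖mob (γ 0) (γ z)‖ ≤ ‖z‖ := by
  have h0 : (0:ℂ) ∈ ball (0:ℂ) 1 := by simp
  have hb : ‖γ 0‖ < 1 := by have := hm h0; rwa [mem_ball_zero_iff] at this
  set φ : ℂ → ℂ := fun w => mob (γ 0) (γ w) with hφ
  have hφ0 : φ 0 = 0 := mob_self hb
  have hφd : DifferentiableOn ℂ φ (ball 0 1) := (mob_diffOn hb).comp hd hm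
  have hφm : Set.MapsTo φ (ball 0 1) (ball (φ 0) 1) := by
    rw [hφ0]
    exact (mob_mapsTo hb).comp hm
  have := Complex.dist_le_div_mul_dist_of_mapsTo_ball hφd (hφm.mono_right ball_subset_closedBall) (z := z) (by rwa [mem_ball_zero_iff])
  simpa [hφ0, dist_eq_norm] using this

lemma pick {γ : ℂ → ℂ} (hd : DifferentiableOn ℂ γ (ball 0 1))
    (hm : Set.MapsTo γ (ball 0 1) (ball 0 1)) {z w : ℂ} (hz : ‖z‖ < 1) (hw : ‖w‖ < 1) :
    ‖mob (γ z) (γ w)‖ ≤ ‖mob z w‖ := by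
  have hψd : DifferentiableOn ℂ (γ ∘ mob z) (ball 0 1) := hd.comp (mob_diffOn hz) (mob_mapsTo hz)
  have hψm : Set.MapsTo (γ ∘ mob z) (ball 0 1) (ball 0 1) := hm.comp (mob_mapsTo hz)
  have h := pick0 hψd hψm (z := mob z w) (mob_lt_one hz hw)
  simpa [Function.comp, mob_zero, mob_invol hz hw] using h

lemma one_sub_conj_mul_eq (a u : ℂ) :
    1 - (starRingEnd ℂ) a * u = ((1 - ‖a‖ ^ 2 : ℝ) : ℂ) + (starRingEnd ℂ) a * (a - u) := by
  have h : ((‖a‖ ^ 2 : ℝ) : ℂ) = a * (starRingEnd ℂ) a := by rw [Complex.mul_conj']; norm_cast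
  rw [Complex.ofReal_sub, Complex.ofReal_one, h]
  ring

lemma norm_real_one_sub_sq (a : ℂ) (ha : ‖a‖ ≤ 1) :
    ‖((1 - ‖a‖ ^ 2 : ℝ) : ℂ)‖ = 1 - ‖a‖ ^ 2 := by
  rw [Complex.norm_real, Real.norm_eq_abs]
  exact abs_of_nonneg (by nlinarith [norm_nonneg a])

lemma den_le (a u : ℂ) (ha : ‖a‖ ≤ 1) :
    ‖1 - (starRingEnd ℂ) a * u‖ ≤ (1 - ‖a‖ ^ 2) + ‖a - u‖ := by
  rw [one_sub_conj_mul_eq a u]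
  refine (norm_add_le _ _).trans ?_
  have h2 : ‖(starRingEnd ℂ) a * (a - u)‖ ≤ ‖a - u‖ := by
    rw [norm_mul, RingHomIsometric.norm_map]
    exact mul_le_of_le_one_left (norm_nonneg _) ha
  rw [norm_real_one_sub_sq a ha]
  linarith

lemma den_ge (a u : ℂ) (ha : ‖a‖ ≤ 1) :
    (1 - ‖a‖ ^ 2) - ‖a - u‖ ≤ ‖1 - (starRingEnd ℂ) a * u‖ := by
  rw [one_sub_conj_mul_eq a u]
  have h1 := norm_sub_norm_le ((1 - ‖a‖ ^ 2 : ℝ) : ℂ) (-((starRingEnd ℂ) a * (a - u)))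
  rw [sub_neg_eq_add, norm_neg] at h1
  have h3 : ‖(starRingEnd ℂ) a * (a - u)‖ ≤ ‖a - u‖ := by
    rw [norm_mul, RingHomIsometric.norm_map]
    exact mul_le_of_le_one_left (norm_nonneg _) ha
  rw [norm_real_one_sub_sq a ha] at h1
  linarith

lemma euclid_of_pd {a u : ℂ} {t : ℝ} (ha : ‖a‖ < 1) (hu : ‖u‖ < 1) (ht : t < 1)
    (h : ‖mob a u‖ ≤ t) : ‖a - u‖ ≤ t / (1 - t) * (1 - ‖a‖ ^ 2) := by
  have hd := den_ne ha hu
  have hpos : 0 < ‖1 - (starRingEnd ℂ) a * u‖ := norm_pos_iff.mpr hd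
  have ht0 : 0 ≤ t := le_trans (norm_nonneg _) h
  have h1 : ‖a - u‖ ≤ t * ‖1 - (starRingEnd ℂ) a * u‖ := by
    have : ‖mob a u‖ * ‖1 - (starRingEnd ℂ) a * u‖ ≤ t * ‖1 - (starRingEnd ℂ) a * u‖ :=
      mul_le_mul_of_nonneg_right h hpos.le
    rwa [mob, norm_div, div_mul_cancel₀ _ hpos.ne'] at this
  have h2 := den_le a u ha.le
  have h4 : 0 < 1 - t := by linarith
  rw [div_mul_eq_mul_div, le_div_iff₀ h4]
  nlinarith

lemma onesub_of_pd {a u : ℂ} {t : ℝ} (ha : ‖a‖ < 1) (hu : ‖u‖ < 1) (ht : t < 1)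
    (h : ‖mob a u‖ ≤ t) : 1 - ‖u‖ ^ 2 ≤ 2 / (1 - t) * (1 - ‖a‖ ^ 2) := by
  have he := euclid_of_pd ha hu ht h
  have ht0 : 0 ≤ t := le_trans (norm_nonneg _) h
  have h1 : 1 - ‖u‖ ≤ (1 - ‖a‖) + ‖a - u‖ := by
    have := norm_sub_norm_le a u
    linarith [abs_le.mp (abs_norm_sub_norm_le a u)]
  have h2 : 1 - ‖a‖ ≤ 1 - ‖a‖ ^ 2 := by nlinarith [norm_nonneg a]
  have h3 : 1 - ‖u‖ ^ 2 ≤ 2 * (1 - ‖u‖) := by nlinarith [norm_nonneg u]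
  have h4 : 0 < 1 - t := by linarith
  have h5 : t / (1 - t) * (1 - ‖a‖ ^ 2) + (1 - ‖a‖ ^ 2) = 1 / (1 - t) * (1 - ‖a‖ ^ 2) := by
    field_simp
    ring
  have h6 : 1 - ‖u‖ ≤ 1 / (1 - t) * (1 - ‖a‖ ^ 2) := by linarith
  have h7 : 2 / (1 - t) * (1 - ‖a‖ ^ 2) = 2 * (1 / (1 - t) * (1 - ‖a‖ ^ 2)) := by ring
  linarith

lemma sep_summable {ι : Type} [Countable ι] (a : ι → ℂ) (ha : ∀ i, ‖a i‖ < 1)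
    {s : ℝ} (hs : 0 < s) (hs1 : s ≤ 1)
    (hsep : ∀ i j, i ≠ j → s ≤ ‖mob (a i) (a j)‖) :
    Summable fun i => (1 - ‖a i‖ ^ 2) ^ 2 := by
  set ε : ℝ := s / 8 with hε
  have hε0 : 0 < ε := by positivity
  set B : ι → Set ℂ := fun i => ball (a i) (ε * (1 - ‖a i‖)) with hB
  -- pairwise separation of centers
  have hdist : ∀ i j, i ≠ j → (s / 4) * ((1 - ‖a i‖) + (1 - ‖a j‖)) ≤ ‖a i - a j‖ := by
    intro i j hij
    have key : ∀ k l, k ≠ l → (s / 2) * (1 - ‖a k‖) ≤ ‖a k - a l‖ := by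
      intro k l hkl
      have h1 := hsep k l hkl
      have hd := den_ne (ha k) (ha l)
      have hpos : 0 < ‖1 - (starRingEnd ℂ) (a k) * (a l)‖ := norm_pos_iff.mpr hd
      have h2 : s * ‖1 - (starRingEnd ℂ) (a k) * (a l)‖ ≤ ‖a k - a l‖ := by
        have := mul_le_mul_of_nonneg_right h1 hpos.le
        rwa [mob, norm_div, div_mul_cancel₀ _ hpos.ne'] at this
      have h3 := den_ge (a k) (a l) (ha k).le
      have h4 : (1 - ‖a k‖) ≤ 1 - ‖a k‖ ^ 2 := by
        nlinarith [mul_nonneg (norm_nonneg (a k)) (sub_nonneg.mpr (ha k).le)]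
      nlinarith [norm_nonneg (a k - a l)]
    have h5 := key i j hij
    have h6 := key j i (Ne.symm hij)
    rw [← norm_neg (a j - a i), neg_sub] at h6
    nlinarith
  -- the balls are pairwise disjoint
  have hdisj : Pairwise (Function.onFun Disjoint B) := by
    intro i j hij
    apply ball_disjoint_ball
    rw [dist_eq_norm]
    have := hdist i j hij
    have h7 : ε * (1 - ‖a i‖) + ε * (1 - ‖a j‖) ≤ (s / 4) * ((1 - ‖a i‖) + (1 - ‖a j‖)) := by
      have hi := (ha i).le; have hj := (ha j).le
      nlinarith [norm_nonneg (a i), norm_nonneg (a j)]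
    linarith
  -- all balls inside ball 0 2
  have hsub : ∀ i, B i ⊆ ball (0 : ℂ) 2 := by
    intro i x hx
    rw [mem_ball] at hx ⊢
    rw [dist_eq_norm] at hx
    rw [dist_zero_right]
    have h8 : ‖x‖ ≤ ‖x - a i‖ + ‖a i‖ := by
      have := norm_add_le (x - a i) (a i); simpa using this
    have : ε * (1 - ‖a i‖) ≤ 1 := by nlinarith [norm_nonneg (a i), (ha i).le]
    linarith [(ha i).le]
  -- volume bound
  have hvol : ∑' i, MeasureTheory.volume (B i) ≠ ⊤ := by
    have h9 : MeasureTheory.volume (⋃ i, B i) ≤ MeasureTheory.volume (ball (0 : ℂ) 2) :=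
      MeasureTheory.measure_mono (Set.iUnion_subset hsub)
    rw [← MeasureTheory.measure_iUnion hdisj fun i => measurableSet_ball]
    exact ne_top_of_le_ne_top (by simp [Complex.volume_ball]; exact ENNReal.mul_ne_top (by simp) (by simp)) h9
  -- summability of radii squared
  have hsum : Summable fun i => (ε * (1 - ‖a i‖)) ^ 2 := by
    have h10 : ∀ i, MeasureTheory.volume (B i)
        = ENNReal.ofReal ((ε * (1 - ‖a i‖)) ^ 2) * NNReal.pi := by
      intro i
      rw [hB, Complex.volume_ball, ← ENNReal.ofReal_pow (by nlinarith [(ha i).le])]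
    rw [funext h10, ENNReal.tsum_mul_right] at hvol
    have h11 : ∑' i, ENNReal.ofReal ((ε * (1 - ‖a i‖)) ^ 2) ≠ ⊤ := by
      intro hcon
      rw [hcon] at hvol
      exact hvol (ENNReal.top_mul (by simp [NNReal.pi_ne_zero]))
    have h12 := ENNReal.summable_toReal h11
    refine h12.congr fun i => ?_
    rw [ENNReal.toReal_ofReal (by positivity)]
  -- conclude
  have h13 : Summable fun i => (4 / ε ^ 2) * (ε * (1 - ‖a i‖)) ^ 2 := hsum.mul_left _
  refine Summable.of_nonneg_of_le (fun i => sq_nonneg _) (fun i => ?_) h13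
  have hi := (ha i).le
  have hn := norm_nonneg (a i)
  have h14 : (4 / ε ^ 2) * (ε * (1 - ‖a i‖)) ^ 2 = 4 * (1 - ‖a i‖) ^ 2 := by
    field_simp
  rw [h14]
  nlinarith [mul_nonneg (mul_nonneg (sq_nonneg (1 - ‖a i‖)) (sub_nonneg.mpr hi))
    (by linarith : (0:ℝ) ≤ 3 + ‖a i‖)]

lemma deriv_bound {γ : ℂ → ℂ} (hd : DifferentiableOn ℂ γ (ball 0 1))
    (hm : Set.MapsTo γ (ball 0 1) (ball 0 1)) {z : ℂ} {ρ : ℝ} (hρ0 : 0 ≤ ρ) (hρ : ρ < 1)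
    (hz : ‖z‖ ≤ ρ) : ‖deriv γ z‖ ≤ 2 / (1 - ρ) * (1 - ‖γ z‖ ^ 2) := by
  have hz1 : ‖z‖ < 1 := lt_of_le_of_lt hz hρ
  have hzb : z ∈ ball (0:ℂ) 1 := by rwa [mem_ball_zero_iff]
  have hγz : ‖γ z‖ < 1 := by have := hm hzb; rwa [mem_ball_zero_iff] at this
  set R₁ : ℝ := (1 - ρ) / 4 with hR₁
  have hR₁0 : 0 < R₁ := by rw [hR₁]; linarith
  set R₂ : ℝ := (1 - ‖γ z‖ ^ 2) / 2 with hR₂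
  have hX : 0 < 1 - ‖γ z‖ ^ 2 := by nlinarith [norm_nonneg (γ z)]
  have hsub : ball z R₁ ⊆ ball (0:ℂ) 1 := by
    intro w hw
    rw [mem_ball, dist_eq_norm] at hw
    rw [mem_ball_zero_iff]
    have : ‖w‖ ≤ ‖w - z‖ + ‖z‖ := by have := norm_add_le (w - z) z; simpa using this
    rw [hR₁] at hw
    linarith
  have hmaps : Set.MapsTo γ (ball z R₁) (ball (γ z) R₂) := by
    intro w hw
    have hw1 : ‖w‖ < 1 := by have := hsub hw; rwa [mem_ball_zero_iff] at this
    rw [mem_ball, dist_eq_norm] at hw ⊢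
    -- pseudo-distance between z and w is < 1/4
    have hden : 1 - ρ ≤ ‖1 - (starRingEnd ℂ) z * w‖ := by
      have h1 := norm_sub_norm_le (1 : ℂ) ((starRingEnd ℂ) z * w)
      rw [norm_one, norm_mul, RingHomIsometric.norm_map] at h1
      nlinarith [norm_nonneg w, norm_nonneg z]
    have hpd : ‖mob z w‖ ≤ 1 / 4 := by
      rw [mob, norm_div, div_le_div_iff₀ (norm_pos_iff.mpr (den_ne hz1 hw1)) (by norm_num)]
      have : ‖z - w‖ ≤ R₁ := by
        rw [← norm_neg (z - w), neg_sub]; linarith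
      rw [hR₁] at this
      linarith
    have hpick := pick hd hm hz1 hw1
    have heuc := euclid_of_pd hγz (by have := hm (hsub (mem_ball_iff_norm.mpr hw)); rwa [mem_ball_zero_iff] at this)
      (by norm_num : (1:ℝ)/4 < 1) (le_trans hpick hpd)
    rw [← norm_neg (γ z - γ w), neg_sub] at heuc
    rw [hR₂]
    have : (1:ℝ)/4 / (1 - 1/4) * (1 - ‖γ z‖ ^ 2) = (1 - ‖γ z‖ ^ 2) / 3 := by ring
    rw [this] at heuc
    linarith
  have := Complex.norm_deriv_le_div_of_mapsTo_ball (hd.mono hsub) (hmaps.mono_right ball_subset_closedBall) hR₁0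
  refine this.trans ?_
  rw [hR₁, hR₂, div_div_div_eq]
  rw [div_le_iff₀ (by nlinarith)]
  have hρne : (1 - ρ) ≠ 0 := by intro h; linarith [(by linarith : (0:ℝ) < 1 - ρ)]
  have h20 : 2 * (1 - ‖γ z‖ ^ 2) / (1 - ρ) * (2 * (1 - ρ)) = 4 * (1 - ‖γ z‖ ^ 2) := by
    field_simp [hρne]
    ring
  have h21 : 2 / (1 - ρ) * (1 - ‖γ z‖ ^ 2) * (2 * (1 - ρ)) = 4 * (1 - ‖γ z‖ ^ 2) := by
    field_simp [hρne]
    ring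
  rw [h21]
  linarith

lemma tanh_sep {r x : ℝ} (hr : 0 < r) (hx0 : 0 ≤ x) (hx1 : x < 1)
    (h : r ≤ Real.log ((1 + x) / (1 - x)) / 2) :
    (Real.exp (2 * r) - 1) / (Real.exp (2 * r) + 1) ≤ x := by
  set E := Real.exp (2 * r) with hE
  have hE1 : 1 < E := by
    rw [hE]
    nlinarith [Real.add_one_le_exp (2 * r), hr]
  have hQ : 0 < (1 + x) / (1 - x) := by
    apply div_pos <;> linarith
  have h2 : E ≤ (1 + x) / (1 - x) := by
    rw [hE]
    calc Real.exp (2 * r) ≤ Real.exp (Real.log ((1 + x) / (1 - x))) :=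
          Real.exp_le_exp.mpr (by linarith)
      _ = (1 + x) / (1 - x) := Real.exp_log hQ
  rw [le_div_iff₀ (by linarith)] at h2
  rw [div_le_iff₀ (by linarith)]
  nlinarith

theorem poincare_series_convergence' (r : ℝ) (hr : 0 < r)
    (ι : Type) [Countable ι] (γ : ι → ℂ → ℂ)
    (hhol : ∀ i, DifferentiableOn ℂ (γ i) (ball (0 : ℂ) 1))
    (hbij : ∀ i, Set.BijOn (γ i) (ball (0 : ℂ) 1) (ball (0 : ℂ) 1))
    (hsep : ∀ i j, i ≠ j → r ≤ Real.log ((1 + ‖mob (γ i 0) (γ j 0)‖) / (1 - ‖mob (γ i 0) (γ j 0)‖)) / 2)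
    (f : ℂ → ℂ) (hf : DifferentiableOn ℂ f (ball (0 : ℂ) 1))
    (hbd : ∃ B : ℝ, ∀ z ∈ ball (0 : ℂ) 1, ‖f z‖ ≤ B) :
    (∀ z ∈ ball (0 : ℂ) 1,
      Summable fun i => ‖f (γ i z) * (deriv (γ i) z) ^ 2‖) ∧
    ∃ g : ℂ → ℂ, DifferentiableOn ℂ g (ball (0 : ℂ) 1) ∧
      (∀ z ∈ ball (0 : ℂ) 1,
        HasSum (fun i => f (γ i z) * (deriv (γ i) z) ^ 2) (g z)) ∧
      ∀ K ⊆ ball (0 : ℂ) 1, IsCompact K →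
        TendstoUniformlyOn
          (fun (F : Finset ι) z => ∑ i ∈ F, f (γ i z) * (deriv (γ i) z) ^ 2)
          g atTop K := by
  obtain ⟨B, hB⟩ := hbd
  have h01 : (0:ℂ) ∈ ball (0:ℂ) 1 := by simp
  have hB0 : 0 ≤ B := le_trans (norm_nonneg _) (hB 0 h01)
  set a : ι → ℂ := fun i => γ i 0 with ha_def
  have hmaps : ∀ i, Set.MapsTo (γ i) (ball 0 1) (ball 0 1) := fun i => (hbij i).mapsTo
  have ha : ∀ i, ‖a i‖ < 1 := fun i => by
    have := hmaps i h01; rwa [mem_ball_zero_iff] at this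
  set s : ℝ := (Real.exp (2*r) - 1)/(Real.exp (2*r) + 1) with hs_def
  have hE1 : 1 < Real.exp (2*r) := by nlinarith [Real.add_one_le_exp (2*r)]
  have hs : 0 < s := div_pos (by linarith) (by linarith)
  have hs1 : s ≤ 1 := by rw [div_le_one (by linarith)]; linarith
  have hsep' : ∀ i j, i ≠ j → s ≤ ‖mob (a i) (a j)‖ := fun i j hij =>
    tanh_sep hr (norm_nonneg _) (mob_lt_one (ha i) (ha j)) (hsep i j hij)
  have hS : Summable (fun i => (1 - ‖a i‖^2)^2) := sep_summable a ha hs hs1 hsep'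
  -- the master bound
  have key : ∀ ρ : ℝ, 0 ≤ ρ → ρ < 1 → ∀ i, ∀ z : ℂ, ‖z‖ ≤ ρ →
      ‖f (γ i z) * (deriv (γ i) z)^2‖
        ≤ (B * (2/(1-ρ))^4) * (1-‖a i‖^2)^2 := by
    intro ρ hρ0 hρ1 i z hzρ
    have hz1 : ‖z‖ < 1 := lt_of_le_of_lt hzρ hρ1
    have hzb : z ∈ ball (0:ℂ) 1 := by rwa [mem_ball_zero_iff]
    have hγz : ‖γ i z‖ < 1 := by have := hmaps i hzb; rwa [mem_ball_zero_iff] at this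
    have hc : 0 < 2/(1-ρ) := by apply div_pos <;> linarith
    have hpd : ‖mob (a i) (γ i z)‖ ≤ ρ :=
      le_trans (pick0 (hhol i) (hmaps i) hz1) hzρ
    have h1 : 1 - ‖γ i z‖^2 ≤ 2/(1-ρ) * (1 - ‖a i‖^2) :=
      onesub_of_pd (ha i) hγz hρ1 hpd
    have h2 : ‖deriv (γ i) z‖ ≤ 2/(1-ρ) * (1 - ‖γ i z‖^2) :=
      deriv_bound (hhol i) (hmaps i) hρ0 hρ1 hzρ
    have hSi : 0 < 1 - ‖a i‖^2 := by nlinarith [norm_nonneg (a i), ha i]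
    have h3 : ‖deriv (γ i) z‖ ≤ (2/(1-ρ))^2 * (1 - ‖a i‖^2) := by
      calc ‖deriv (γ i) z‖ ≤ 2/(1-ρ) * (1 - ‖γ i z‖^2) := h2
        _ ≤ 2/(1-ρ) * (2/(1-ρ) * (1 - ‖a i‖^2)) := by
            exact mul_le_mul_of_nonneg_left h1 hc.le
        _ = (2/(1-ρ))^2 * (1 - ‖a i‖^2) := by ring
    have h4 : ‖deriv (γ i) z‖^2 ≤ ((2/(1-ρ))^2 * (1 - ‖a i‖^2))^2 :=
      pow_le_pow_left₀ (norm_nonneg _) h3 2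
    rw [norm_mul, norm_pow]
    calc ‖f (γ i z)‖ * ‖deriv (γ i) z‖^2
        ≤ B * (((2/(1-ρ))^2 * (1 - ‖a i‖^2))^2) := by
          apply mul_le_mul (hB _ (by rwa [mem_ball_zero_iff])) h4
            (by positivity) hB0
      _ = (B * (2/(1-ρ))^4) * (1-‖a i‖^2)^2 := by ring
  -- each term is differentiable on the disc
  have hterm : ∀ i, DifferentiableOn ℂ
      (fun z => f (γ i z) * (deriv (γ i) z)^2) (ball (0:ℂ) 1) := by
    intro i
    exact (hf.comp (hhol i) (hmaps i)).mul
      ((((hhol i).analyticOnNhd isOpen_ball).deriv.differentiableOn).pow 2)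
  -- pointwise absolute summability
  have hsummable : ∀ z ∈ ball (0:ℂ) 1,
      Summable fun i => ‖f (γ i z) * (deriv (γ i) z)^2‖ := by
    intro z hz
    rw [mem_ball_zero_iff] at hz
    exact Summable.of_nonneg_of_le (fun i => norm_nonneg _)
      (fun i => key ‖z‖ (norm_nonneg z) hz i z le_rfl)
      (hS.mul_left _)
  set g : ℂ → ℂ := fun z => ∑' i, f (γ i z) * (deriv (γ i) z)^2 with hg_def
  -- uniform convergence on compacts
  have huc : ∀ K ⊆ ball (0:ℂ) 1, IsCompact K →
      TendstoUniformlyOn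
        (fun (F : Finset ι) z => ∑ i ∈ F, f (γ i z) * (deriv (γ i) z)^2) g atTop K := by
    intro K hK hKc
    rcases K.eq_empty_or_nonempty with rfl | hne
    · intro v hv
      simp
    · obtain ⟨z₀, hz₀K, hmax'⟩ := hKc.exists_isMaxOn hne continuous_norm.continuousOn
      have hmax : ∀ z ∈ K, ‖z‖ ≤ ‖z₀‖ := fun z hz => hmax' hz
      have hρ1 : ‖z₀‖ < 1 := by
        have := hK hz₀K; rwa [mem_ball_zero_iff] at this
      exact tendstoUniformlyOn_tsum (hS.mul_left (B * (2/(1-‖z₀‖))^4))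
        (fun i z hz => key ‖z₀‖ (norm_nonneg _) hρ1 i z (hmax z hz))
  refine ⟨hsummable, g, ?_, ?_, huc⟩
  · -- differentiability of the sum
    have hTLU : TendstoLocallyUniformlyOn
        (fun (F : Finset ι) z => ∑ i ∈ F, f (γ i z) * (deriv (γ i) z)^2) g atTop
        (ball (0:ℂ) 1) :=
      (tendstoLocallyUniformlyOn_iff_forall_isCompact isOpen_ball).mpr
        fun K hK hKc => huc K hK hKc
    exact hTLU.differentiableOn
      (Eventually.of_forall fun F => DifferentiableOn.fun_sum fun i _ => hterm i)
      isOpen_ball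
  · intro z hz
    exact ((hsummable z hz).of_norm).hasSum


end

/-- Let `r > 0` and `Γ = (γ i)` be a countable family of
biholomorphic automorphisms of the unit disc such that `i ↦ γ i 0` is injective
and the orbit `{γ i 0}` is `r`-separated for the hyperbolic distance.  Then for
every bounded holomorphic `f` on the disc, the Poincaré series
`Σ_i f (γ i z) · (γ i)′(z)²` converges absolutely and uniformly on compact
subsets of the disc, and defines a holomorphic function on the disc. -/
theorem poincare_series_convergence (r : ℝ) (hr : 0 < r)
    (ι : Type) [Countable ι] (γ : ι → ℂ → ℂ)
    (hhol : ∀ i, DifferentiableOn ℂ (γ i) (ball (0 : ℂ) 1))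
    (hbij : ∀ i, Set.BijOn (γ i) (ball (0 : ℂ) 1) (ball (0 : ℂ) 1))
    (hinvhol : ∀ i, ∃ δ : ℂ → ℂ, DifferentiableOn ℂ δ (ball (0 : ℂ) 1) ∧
      ∀ z ∈ ball (0 : ℂ) 1, δ (γ i z) = z)
    (hinj : Function.Injective fun i => γ i 0)
    (hsep : ∀ i j, i ≠ j → r ≤ hdist (γ i 0) (γ j 0))
    (f : ℂ → ℂ) (hf : DifferentiableOn ℂ f (ball (0 : ℂ) 1))
    (hbd : ∃ B : ℝ, ∀ z ∈ ball (0 : ℂ) 1, ‖f z‖ ≤ B) :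
    (∀ z ∈ ball (0 : ℂ) 1,
      Summable fun i => ‖f (γ i z) * (deriv (γ i) z) ^ 2‖) ∧
    ∃ g : ℂ → ℂ, DifferentiableOn ℂ g (ball (0 : ℂ) 1) ∧
      (∀ z ∈ ball (0 : ℂ) 1,
        HasSum (fun i => f (γ i z) * (deriv (γ i) z) ^ 2) (g z)) ∧
      ∀ K ⊆ ball (0 : ℂ) 1, IsCompact K →
        TendstoUniformlyOn
          (fun (F : Finset ι) z => ∑ i ∈ F, f (γ i z) * (deriv (γ i) z) ^ 2)
          g atTop K := by
  have hsep' : ∀ i j, i ≠ j →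
      r ≤ Real.log ((1 + ‖mob (γ i 0) (γ j 0)‖) / (1 - ‖mob (γ i 0) (γ j 0)‖)) / 2 := by
    intro i j hij
    have h := hsep i j hij
    simpa [hdist, arctanh, mob] using h
  exact poincare_series_convergence' r hr ι γ hhol hbij hsep' f hf hbd
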